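/- Minimax optimality of the averaged strategy: if the combined regrets of both players are at most ε·T, then the uniform distribution over the min player's iterates achieves a minimax value at most ε above the pure minimax value: max_{v∈K₂} (1/T)∑_t M(u_t, v) ≤ min_{u∈K₁} max_{v∈K₂} M(u,v) + ε. -/
import Mathlib


/-- Minimax optimality of the averaged strategy of the min player. -/
theorem stmt11 (K₁ K₂ : Type*) [Nonempty K₁] [Nonempty K₂]
    (M : K₁ → K₂ → ℝ) (C : ℝ) (hbdd : ∀ a b, |M a b| ≤ C)
    (T : ℕ) (hT : 1 ≤ T)
    (u : Fin T → K₁) (v : Fin T → K₂) (B₁ B₂ : ℝ)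
    (hB1 : ∀ w : K₁, ∑ t, M (u t) (v t) - ∑ t, M w (v t) ≤ B₁)
    (hB2 : ∀ w : K₂, ∑ t, M (u t) w - ∑ t, M (u t) (v t) ≤ B₂) :
    sSup (Set.range fun w : K₂ => (1 / (T : ℝ)) * ∑ t, M (u t) w) ≤
      sInf (Set.range fun a : K₁ => sSup (Set.range fun w : K₂ => M a w)) +
        (B₁ + B₂) / T := by
  have hTpos : (0 : ℝ) < T := by exact_mod_cast hT
  have key : ∀ a : K₁,
      sSup (Set.range fun w : K₂ => (1 / (T : ℝ)) * ∑ t, M (u t) w) ≤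
        sSup (Set.range fun w : K₂ => M a w) + (B₁ + B₂) / T := by
    intro a
    have hbA : BddAbove (Set.range fun w : K₂ => M a w) :=
      ⟨C, by rintro x ⟨w, rfl⟩; exact (abs_le.mp (hbdd a w)).2⟩
    set S := sSup (Set.range fun w : K₂ => M a w) with hS
    apply csSup_le (Set.range_nonempty _)
    rintro x ⟨w, rfl⟩
    have h1 : ∑ t, M (u t) w ≤ ∑ t, M a (v t) + (B₁ + B₂) := by
      have := hB2 w
      have := hB1 a
      linarith
    have h2 : ∑ t, M a (v t) ≤ T * S := by
      calc ∑ t, M a (v t) ≤ ∑ _t : Fin T, S :=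
            Finset.sum_le_sum fun t _ => le_csSup hbA ⟨v t, rfl⟩
        _ = T * S := by simp [Finset.sum_const, mul_comm]
    have h3 : ∑ t, M (u t) w ≤ T * S + (B₁ + B₂) := by linarith
    simp only []
    have : (1 / (T : ℝ)) * ∑ t, M (u t) w ≤ (1 / T) * (T * S + (B₁ + B₂)) := by
      apply mul_le_mul_of_nonneg_left h3 (by positivity)
    calc (1 / (T : ℝ)) * ∑ t, M (u t) w ≤ (1 / T) * (T * S + (B₁ + B₂)) := this
      _ = S + (B₁ + B₂) / T := by field_simp
  rw [← sub_le_iff_le_add]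
  apply le_csInf (Set.range_nonempty _)
  rintro x ⟨a, rfl⟩
  have := key a
  linarith
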